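/- arXiv:2511.05900 — 2 statements merged into one kernel-verified Lean document; each statement's English description precedes it below -/
import Mathlib

section
/- Let I be a finite nonempty index set, and for each i ∈ I let xᵢ : [0,∞) → ℝ^{nᵢ} be a continuously differentiable curve; write x(t) for the tuple (xᵢ(t))_{i∈I}. Let V : (∏_{i∈I} ℝ^{nᵢ}) × [0,∞) → [0,∞) be continuously differentiable with V(x(0),0) < a, let α : [0,a) → ℝ be a locally Lipschitz class K function, and let (wᵢ)_{i∈I} be real numbers with ∑_{i∈I} wᵢ = 1. Suppose that for every i ∈ I and every t ≥ 0, ∇_{xᵢ}V(x(t),t)·ẋᵢ(t) + wᵢ·(∂V/∂t(x(t),t) + α(V(x(t),t))) ≤ 0. Then V(x(t),t) → 0 as t → ∞. -/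
/-!
Summing the agents' allocated constraints over `i` and using `∑ i, wᵢ = 1` gives the shared
constraint `v' ≤ -α(v)` for `v(t) = V(x(t), t)`. Since `α > 0` on `(0, a)`, a fencing
argument shows `v(t) ≤ v(s)` for `s ≤ t` whenever `v(s) < a`; as `v(0) < a`, `v` is antitone
on `[0, ∞)`. If `v` stayed above some `ε > 0`, then `v' ≤ -α(ε) < 0` would drive `v` below
zero in finite time.
-/

/-- `α` is a class `K` function on `[0, a)`: continuous, strictly increasing, `α 0 = 0`. -/
def IsClassKOn (a : ℝ) (α : ℝ → ℝ) : Prop :=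
  ContinuousOn α (Set.Ico 0 a) ∧ StrictMonoOn α (Set.Ico 0 a) ∧ α 0 = 0

open Set Filter Topology

theorem IsClassKOn.pos {a r : ℝ} {α : ℝ → ℝ} (hα : IsClassKOn a α) (hr : 0 < r) (hra : r < a) :
    0 < α r :=
  hα.2.2 ▸ hα.2.1 ⟨le_rfl, hr.trans hra⟩ ⟨hr.le, hra⟩ hr

section Comparison

variable {a : ℝ} {α v v' : ℝ → ℝ}

theorem le_of_hasDerivAt_le_neg_classK (hα : IsClassKOn a α) {s : ℝ}
    (hv : ∀ t ≥ s, HasDerivAt v (v' t) t) (hdecay : ∀ t ≥ s, v' t ≤ -α (v t))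
    (hs : 0 ≤ v s) (hsa : v s < a) {t : ℝ} (hst : s ≤ t) : v t ≤ v s := by
  by_contra! hts
  obtain ⟨c, hsc, hc⟩ := exists_between (lt_min hts hsa)
  have hfence : v t ≤ c :=
    image_le_of_deriv_right_lt_deriv_boundary (B := fun _ => c) (B' := fun _ => 0)
      (fun u hu => (hv u hu.1).continuousAt.continuousWithinAt)
      (fun u hu => (hv u hu.1).hasDerivWithinAt) hsc.le (fun _ => hasDerivAt_const _ c)
      (fun u hu hvu => (hdecay u hu.1).trans_lt <| neg_neg_of_pos <|
        hvu ▸ hα.pos (hs.trans_lt hsc) (hc.trans_le (min_le_right _ _)))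
      ⟨hst, le_rfl⟩
  linarith [min_le_left (v t) a]

theorem antitoneOn_of_hasDerivAt_le_neg_classK (hα : IsClassKOn a α)
    (hv : ∀ t ≥ 0, HasDerivAt v (v' t) t) (hdecay : ∀ t ≥ 0, v' t ≤ -α (v t))
    (hnonneg : ∀ t ≥ 0, 0 ≤ v t) (h0a : v 0 < a) : AntitoneOn v (Ici 0) := by
  intro s (hs : 0 ≤ s) t _ hst
  have hsa : v s < a :=
    (le_of_hasDerivAt_le_neg_classK hα hv hdecay (hnonneg 0 le_rfl) h0a hs).trans_lt h0a
  exact le_of_hasDerivAt_le_neg_classK hα (fun u hu => hv u (hs.trans hu))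
    (fun u hu => hdecay u (hs.trans hu)) (hnonneg s hs) hsa hst

theorem le_sub_mul_of_hasDerivAt_le {m : ℝ} (hv : ∀ t ≥ 0, HasDerivAt v (v' t) t)
    (hv' : ∀ t ≥ 0, v' t ≤ -m) {t : ℝ} (ht : 0 ≤ t) : v t ≤ v 0 - t * m :=
  image_le_of_deriv_right_le_deriv_boundary (B := fun t => v 0 - t * m) (B' := fun _ => -m)
    (fun u hu => (hv u hu.1).continuousAt.continuousWithinAt)
    (fun u hu => (hv u hu.1).hasDerivWithinAt) (by simp) (by fun_prop)
    (fun _ _ => ((hasDerivAt_mul_const m).const_sub (v 0)).hasDerivWithinAt)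
    (fun u hu => hv' u hu.1) ⟨ht, le_rfl⟩

theorem tendsto_zero_of_hasDerivAt_le_neg_classK (hα : IsClassKOn a α)
    (hv : ∀ t ≥ 0, HasDerivAt v (v' t) t) (hdecay : ∀ t ≥ 0, v' t ≤ -α (v t))
    (hnonneg : ∀ t ≥ 0, 0 ≤ v t) (h0a : v 0 < a) : Tendsto v atTop (𝓝 0) := by
  have hanti := antitoneOn_of_hasDerivAt_le_neg_classK hα hv hdecay hnonneg h0a
  rw [tendsto_order]
  refine ⟨fun b hb => ?_, fun ε hε => ?_⟩
  · filter_upwards [eventually_ge_atTop 0] with t ht using hb.trans_le (hnonneg t ht)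
  obtain ⟨T, hT, hTε⟩ : ∃ T ≥ 0, v T < ε := by
    by_contra! hge
    have hεa : ε < a := (hge 0 le_rfl).trans_lt h0a
    have hαε := hα.pos hε hεa
    have hlin : ∀ t ≥ 0, v' t ≤ -α ε := fun t ht =>
      (hdecay t ht).trans <| neg_le_neg <| hα.2.1.monotoneOn ⟨hε.le, hεa⟩
        ⟨hnonneg t ht, (hanti self_mem_Ici ht ht).trans_lt h0a⟩ (hge t ht)
    have hT : 0 ≤ (v 0 + 1) / α ε := div_nonneg (by linarith [hnonneg 0 le_rfl]) hαε.le
    have hdrop := le_sub_mul_of_hasDerivAt_le hv hlin hT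
    rw [div_mul_cancel₀ _ hαε.ne'] at hdrop
    linarith [hnonneg _ hT]
  filter_upwards [eventually_ge_atTop T] with t ht using
    (hanti (mem_Ici.2 hT) (mem_Ici.2 (hT.trans ht)) ht).trans_lt hTε

end Comparison

theorem hasDerivAt_comp_prodMk {E F : Type*} [NormedAddCommGroup E] [NormedSpace ℝ E]
    [NormedAddCommGroup F] [NormedSpace ℝ F] {x : ℝ → E} {V : E × ℝ → F} {t : ℝ}
    (hV : DifferentiableAt ℝ V (x t, t)) (hx : DifferentiableAt ℝ x t) :
    HasDerivAt (fun s => V (x s, s)) (fderiv ℝ V (x t, t) (deriv x t, 1)) t :=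
  hV.hasFDerivAt.comp_hasDerivAt (f := fun s => (x s, s)) t
    (hx.hasDerivAt.prodMk (hasDerivAt_id t))

theorem sum_allocated_constraint_eq {ι R F : Type*} [Fintype ι] [DecidableEq ι]
    {E : ι → Type*} [∀ i, AddCommMonoid (E i)] [Semiring R]
    [FunLike F ((∀ i, E i) × R) R] [AddMonoidHomClass F ((∀ i, E i) × R) R]
    (L : F) (y : ∀ i, E i) (c : R) {w : ι → R} (hw : ∑ i, w i = 1) :
    ∑ i, (L (Pi.single i (y i), 0) + w i * (L (0, 1) + c)) = L (y, 1) + c := by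
  have hsingle : ∑ i, ((Pi.single i (y i) : ∀ j, E j), (0 : R)) = (y, 0) := by
    ext
    · simp only [Prod.fst_sum, Finset.univ_sum_single]
    · simp only [Prod.snd_sum, Finset.sum_const_zero]
  rw [Finset.sum_add_distrib, ← Finset.sum_mul, hw, one_mul, ← map_sum, hsingle, ← add_assoc,
    ← map_add, Prod.mk_add_mk, add_zero, zero_add]

theorem constraint_allocation_convergence_general {ι : Type*} [Fintype ι] [DecidableEq ι]
    {n : ι → ℕ} {a : ℝ} {α : ℝ → ℝ}
    (hK : IsClassKOn a α)
    {x : ℝ → ∀ i, EuclideanSpace ℝ (Fin (n i))} (hx : ContDiff ℝ 1 x)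
    {V : ((∀ i, EuclideanSpace ℝ (Fin (n i))) × ℝ) → ℝ} (hV : ContDiff ℝ 1 V)
    (hVnn : ∀ p, 0 ≤ V p) (hV0 : V (x 0, 0) < a)
    {w : ι → ℝ} (hw : ∑ i, w i = 1)
    (hcon : ∀ i, ∀ t, 0 ≤ t →
      fderiv ℝ V (x t, t) (Pi.single i (deriv x t i), (0:ℝ)) +
        w i * (fderiv ℝ V (x t, t) (0, 1) + α (V (x t, t))) ≤ 0) :
    Filter.Tendsto (fun t => V (x t, t)) Filter.atTop (nhds 0) := by
  have hderiv (t : ℝ) := hasDerivAt_comp_prodMk (hV.differentiable one_ne_zero (x t, t))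
    (hx.differentiable one_ne_zero t)
  refine tendsto_zero_of_hasDerivAt_le_neg_classK hK (fun t _ => hderiv t) (fun t ht => ?_)
    (fun _ _ => hVnn _) hV0
  have hsum := Finset.sum_nonpos fun i (_ : i ∈ Finset.univ) => hcon i t ht
  rw [sum_allocated_constraint_eq _ _ _ hw] at hsum
  linarith

/-- **Constraint allocation theorem (Theorem 4.1, smooth case).**
If `V(x(0),0) < a`, `α` is a locally Lipschitz class `K` function on `[0, a)`, the priority
weights satisfy `∑ i, wᵢ = 1`, and each agent `i` enforces, for every `t ≥ 0`,
`∇_{xᵢ}V(x(t),t)·ẋᵢ(t) + wᵢ·(∂V/∂t(x(t),t) + α(V(x(t),t))) ≤ 0`,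
then the shared Lyapunov value `V(x(t),t)` converges to `0` as `t → ∞`. -/
theorem constraint_allocation_convergence {ι : Type*} [Fintype ι] [Nonempty ι] [DecidableEq ι]
    {n : ι → ℕ} {a : ℝ} (ha : 0 < a) {α : ℝ → ℝ}
    (hK : IsClassKOn a α) (hLip : LocallyLipschitzOn (Set.Ico 0 a) α)
    {x : ℝ → ∀ i, EuclideanSpace ℝ (Fin (n i))} (hx : ContDiff ℝ 1 x)
    {V : ((∀ i, EuclideanSpace ℝ (Fin (n i))) × ℝ) → ℝ} (hV : ContDiff ℝ 1 V)
    (hVnn : ∀ p, 0 ≤ V p) (hV0 : V (x 0, 0) < a)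
    {w : ι → ℝ} (hw : ∑ i, w i = 1)
    (hcon : ∀ i, ∀ t, 0 ≤ t →
      fderiv ℝ V (x t, t) (Pi.single i (deriv x t i), (0:ℝ)) +
        w i * (fderiv ℝ V (x t, t) (0, 1) + α (V (x t, t))) ≤ 0) :
    Filter.Tendsto (fun t => V (x t, t)) Filter.atTop (nhds 0) :=
  constraint_allocation_convergence_general hK hx hV hVnn hV0 hw hcon
end

section
/- Let I be a finite nonempty index set, and for each i ∈ I let xᵢ : [0,∞) → ℝ^{nᵢ} be a continuously differentiable curve; write x(t) for the tuple (xᵢ(t))_{i∈I}. For each i ∈ I let Jᵢ : (∏_{i∈I} ℝ^{nᵢ}) × [0,∞) → [0,∞) be continuously differentiable, set J = ∑_{i∈I} Jᵢ, and assume J(x(0),0) < a. Let α : [0,a) → ℝ be a locally Lipschitz subadditive class K function. Assume the gradient-alignment condition ∇_{xᵢ}J(x,t) = ∇_{xᵢ}Jᵢ(x,t) for all i ∈ I, all x, and all t ≥ 0. If for every i ∈ I and every t ≥ 0, ∇_{xᵢ}Jᵢ(x(t),t)·ẋᵢ(t) + ∂Jᵢ/∂t(x(t),t) + α(Jᵢ(x(t),t))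 ≤ 0, then d/dt J(x(t),t) ≤ −α(J(x(t),t)) for all t ≥ 0 and J(x(t),t) → 0 as t → ∞. -/
/-- `α` is subadditive on `[0, a)`: `α (s + r) ≤ α s + α r` whenever `s, r, s + r ∈ [0, a)`. -/
def SubadditiveOn (a : ℝ) (α : ℝ → ℝ) : Prop :=
  ∀ s r : ℝ, s ∈ Set.Ico 0 a → r ∈ Set.Ico 0 a → s + r ∈ Set.Ico 0 a →
    α (s + r) ≤ α s + α r

open Set Filter Topology Finset

namespace IsClassKOn

variable {a s : ℝ} {α : ℝ → ℝ}

theorem pos_s15 (hK : IsClassKOn a α) (hs : s ∈ Ico 0 a) (hs0 : 0 < s) : 0 < α s := by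
  simpa [hK.2.2] using hK.2.1 ⟨le_rfl, hs0.trans hs.2⟩ hs hs0

theorem nonneg (hK : IsClassKOn a α) (hs : s ∈ Ico 0 a) : 0 ≤ α s := by
  rcases hs.1.eq_or_lt with rfl | hs0
  · exact hK.2.2.ge
  · exact (hK.pos_s15 hs hs0).le

end IsClassKOn

theorem SubadditiveOn.apply_sum_le {ι : Type*} {a : ℝ} {α : ℝ → ℝ} (hsub : SubadditiveOn a α)
    (h0 : α 0 = 0) {f : ι → ℝ} (hf : ∀ i, 0 ≤ f i) (s : Finset ι) (hs : ∑ i ∈ s, f i < a) :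
    α (∑ i ∈ s, f i) ≤ ∑ i ∈ s, α (f i) := by
  classical
  induction s using Finset.induction_on with
  | empty => simp [h0]
  | insert i s his ih =>
    rw [sum_insert his] at hs ⊢
    rw [sum_insert his]
    have hsum_nn : 0 ≤ ∑ j ∈ s, f j := sum_nonneg fun j _ => hf j
    have := hsub (f i) (∑ j ∈ s, f j) ⟨hf i, by linarith⟩ ⟨hsum_nn, by linarith [hf i]⟩
      ⟨add_nonneg (hf i) hsum_nn, hs⟩
    linarith [ih (by linarith [hf i])]

theorem Prod.mk_eq_sum_pi_single_add {ι : Type*} [Fintype ι] [DecidableEq ι] {E : ι → Type*}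
    [∀ i, AddCommMonoid (E i)] {F : Type*} [AddCommMonoid F] (v : ∀ i, E i) (c : F) :
    (v, c) = ∑ i, ((Pi.single i (v i), 0) : (∀ i, E i) × F) + (0, c) := by
  ext <;> simp [Prod.fst_sum, Prod.snd_sum, Finset.univ_sum_single]

theorem hasDerivAt_comp_prodMk_self {E F : Type*} [NormedAddCommGroup E] [NormedSpace ℝ E]
    [NormedAddCommGroup F] [NormedSpace ℝ F] {f : E × ℝ → F} {x : ℝ → E} {t : ℝ}
    (hf : DifferentiableAt ℝ f (x t, t)) (hx : DifferentiableAt ℝ x t) :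
    HasDerivAt (fun s => f (x s, s)) (fderiv ℝ f (x t, t) (deriv x t, 1)) t :=
  hf.hasFDerivAt.comp_hasDerivAt (f := fun s => (x s, s)) t
    (hx.hasDerivAt.prodMk (hasDerivAt_id t))

theorem deriv_sum_comp_prodMk_self_of_align {ι : Type*} [Fintype ι] [DecidableEq ι]
    {E : ι → Type*} [∀ i, NormedAddCommGroup (E i)] [∀ i, NormedSpace ℝ (E i)]
    {x : ℝ → ∀ i, E i} {J : ι → (∀ i, E i) × ℝ → ℝ} {t : ℝ} (hx : DifferentiableAt ℝ x t)
    (hJ : ∀ i, DifferentiableAt ℝ (J i) (x t, t))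
    (halign : ∀ i v, fderiv ℝ (fun p => ∑ j, J j p) (x t, t) (Pi.single i v, 0) =
      fderiv ℝ (J i) (x t, t) (Pi.single i v, 0)) :
    deriv (fun s => ∑ j, J j (x s, s)) t =
      ∑ i, (fderiv ℝ (J i) (x t, t) (Pi.single i (deriv x t i), 0) +
        fderiv ℝ (J i) (x t, t) (0, 1)) := by
  have hsum : DifferentiableAt ℝ (fun p => ∑ j, J j p) (x t, t) :=
    DifferentiableAt.fun_sum fun j _ => hJ j
  rw [(hasDerivAt_comp_prodMk_self hsum hx).deriv, Prod.mk_eq_sum_pi_single_add (deriv x t),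
    map_add, map_sum, sum_add_distrib]
  simp only [halign]
  rw [fderiv_fun_sum fun j _ => hJ j, _root_.sum_apply]

section Comparison

variable {a : ℝ} {α V : ℝ → ℝ}

theorem lt_of_deriv_le_neg_classK (hK : IsClassKOn a α) (hV : Differentiable ℝ V)
    (hVnn : ∀ t, 0 ≤ V t) (hV0 : V 0 < a)
    (hderiv : ∀ t, 0 ≤ t → V t < a → deriv V t ≤ -α (V t)) {t : ℝ} (ht : 0 ≤ t) : V t < a := by
  by_contra! hexit
  set S := {s | 0 ≤ s ∧ a ≤ V s}
  have hS : IsClosed S := isClosed_Ici.inter (isClosed_le continuous_const hV.continuous)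
  have hbdd : BddBelow S := ⟨0, fun s hs => hs.1⟩
  set T := sInf S
  have hTS : T ∈ S := hS.csInf_mem ⟨t, ht, hexit⟩ hbdd
  have hanti : AntitoneOn V (Icc 0 T) := by
    refine antitoneOn_of_deriv_nonpos (convex_Icc 0 T) hV.continuous.continuousOn
      hV.differentiableOn fun s hs => ?_
    rw [interior_Icc] at hs
    have hVs : V s < a := not_le.mp fun h => (csInf_le hbdd ⟨hs.1.le, h⟩).not_gt hs.2
    linarith [hderiv s hs.1.le hVs, hK.nonneg ⟨hVnn s, hVs⟩]
  linarith [hanti ⟨le_rfl, hTS.1⟩ ⟨hTS.1, le_rfl⟩ hTS.1, hTS.2]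

theorem antitoneOn_of_deriv_le_neg_classK (hK : IsClassKOn a α) (hV : Differentiable ℝ V)
    (hVnn : ∀ t, 0 ≤ V t) (hVa : ∀ t, 0 ≤ t → V t < a)
    (hderiv : ∀ t, 0 ≤ t → deriv V t ≤ -α (V t)) : AntitoneOn V (Ici 0) := by
  refine antitoneOn_of_deriv_nonpos (convex_Ici 0) hV.continuous.continuousOn
    hV.differentiableOn fun s hs => ?_
  rw [interior_Ici] at hs
  linarith [hderiv s hs.le, hK.nonneg ⟨hVnn s, hVa s hs.le⟩]

theorem exists_lt_of_deriv_le_neg_classK (hK : IsClassKOn a α) (hV : Differentiable ℝ V)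
    (hVnn : ∀ t, 0 ≤ V t) (hVa : ∀ t, 0 ≤ t → V t < a)
    (hderiv : ∀ t, 0 ≤ t → deriv V t ≤ -α (V t)) {ε : ℝ} (hε : 0 < ε) : ∃ T, 0 ≤ T ∧ V T < ε := by
  by_contra! hstay
  have hεa : ε ∈ Ico 0 a := ⟨hε.le, (hstay 0 le_rfl).trans_lt (hVa 0 le_rfl)⟩
  have hαε : 0 < α ε := hK.pos_s15 hεa hε
  have hrate : ∀ s ∈ interior (Ici (0 : ℝ)), deriv V s ≤ -α ε := by
    intro s hs
    rw [interior_Ici] at hs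
    have := hK.2.1.monotoneOn hεa ⟨hVnn s, hVa s hs.le⟩ (hstay s hs.le)
    linarith [hderiv s hs.le]
  set T := V 0 / α ε + 1
  have hT : 0 ≤ T := by have := hVnn 0; positivity
  have := (convex_Ici 0).image_sub_le_mul_sub_of_deriv_le hV.continuous.continuousOn
    hV.differentiableOn hrate 0 self_mem_Ici T hT hT
  have hαT : α ε * T = V 0 + α ε := by rw [mul_add, mul_div_cancel₀ _ hαε.ne', mul_one]
  linarith [hstay T hT]

theorem tendsto_atTop_zero_of_deriv_le_neg_classK (hK : IsClassKOn a α)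
    (hV : Differentiable ℝ V) (hVnn : ∀ t, 0 ≤ V t) (hVa : ∀ t, 0 ≤ t → V t < a)
    (hderiv : ∀ t, 0 ≤ t → deriv V t ≤ -α (V t)) : Tendsto V atTop (𝓝 0) := by
  refine Metric.tendsto_atTop.2 fun ε hε => ?_
  obtain ⟨T, hT, hVT⟩ := exists_lt_of_deriv_le_neg_classK hK hV hVnn hVa hderiv hε
  refine ⟨T, fun s hs => ?_⟩
  have := antitoneOn_of_deriv_le_neg_classK hK hV hVnn hVa hderiv hT (hT.trans hs) hs
  rw [Real.dist_0_eq_abs, abs_of_nonneg (hVnn s)]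
  exact this.trans_lt hVT

end Comparison

theorem santos_special_case_general {ι : Type*} [Fintype ι] [DecidableEq ι]
    {n : ι → ℕ} {a : ℝ} {α : ℝ → ℝ}
    (hK : IsClassKOn a α)
    (hsub : SubadditiveOn a α)
    {x : ℝ → ∀ i, EuclideanSpace ℝ (Fin (n i))} (hx : ContDiff ℝ 1 x)
    {J : ι → ((∀ i, EuclideanSpace ℝ (Fin (n i))) × ℝ) → ℝ}
    (hJ : ∀ i, ContDiff ℝ 1 (J i)) (hJnn : ∀ i p, 0 ≤ J i p)
    (hJ0 : (∑ i, J i (x 0, 0)) < a)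
    (halign : ∀ i, ∀ y : ∀ i, EuclideanSpace ℝ (Fin (n i)), ∀ t : ℝ, 0 ≤ t →
      ∀ v : EuclideanSpace ℝ (Fin (n i)),
        fderiv ℝ (fun p => ∑ j, J j p) (y, t) (Pi.single i v, (0:ℝ)) =
          fderiv ℝ (J i) (y, t) (Pi.single i v, (0:ℝ)))
    (hcon : ∀ i, ∀ t : ℝ, 0 ≤ t →
      fderiv ℝ (J i) (x t, t) (Pi.single i (deriv x t i), (0:ℝ)) +
        fderiv ℝ (J i) (x t, t) (0, 1) + α (J i (x t, t)) ≤ 0) :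
    (∀ t : ℝ, 0 ≤ t →
      deriv (fun s => ∑ j, J j (x s, s)) t ≤ -α (∑ j, J j (x t, t))) ∧
    Filter.Tendsto (fun t => ∑ j, J j (x t, t)) Filter.atTop (nhds 0) := by
  set V := fun s => ∑ j, J j (x s, s)
  have hxd : Differentiable ℝ x := hx.differentiable one_ne_zero
  have hJd : ∀ i, Differentiable ℝ (J i) := fun i => (hJ i).differentiable one_ne_zero
  have hVd : Differentiable ℝ V :=
    (ContDiff.sum fun j _ => (hJ j).comp (hx.prodMk contDiff_id)).differentiable one_ne_zero
  have hVnn : ∀ t, 0 ≤ V t := fun t => sum_nonneg fun j _ => hJnn j _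
  have hdecay : ∀ t, 0 ≤ t → V t < a → deriv V t ≤ -α (V t) := by
    intro t ht hVt
    rw [deriv_sum_comp_prodMk_self_of_align (hxd t) (fun i => hJd i _) (halign · (x t) t ht)]
    calc _ ≤ ∑ i, -α (J i (x t, t)) := sum_le_sum fun i _ => by linarith [hcon i t ht]
      _ = -∑ i, α (J i (x t, t)) := sum_neg_distrib _
      _ ≤ -α (V t) := neg_le_neg (hsub.apply_sum_le hK.2.2 (fun i => hJnn i _) _ hVt)
  have hVa : ∀ t, 0 ≤ t → V t < a := fun t => lt_of_deriv_le_neg_classK hK hVd hVnn hJ0 hdecay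
  have hdecay' : ∀ t, 0 ≤ t → deriv V t ≤ -α (V t) := fun t ht => hdecay t ht (hVa t ht)
  exact ⟨hdecay', tendsto_atTop_zero_of_deriv_le_neg_classK hK hVd hVnn hVa hdecay'⟩

/-- **The final Remark of Appendix A (equation (44)).** With `J = ∑ᵢ Jᵢ`, `J(x(0),0) < a`,
`α` a locally Lipschitz subadditive class `K` function on `[0, a)`, and the gradient-alignment
condition `∇_{xᵢ}J(x,t) = ∇_{xᵢ}Jᵢ(x,t)` for all `i`, `x`, `t ≥ 0`, if each agent enforces
`∇_{xᵢ}Jᵢ(x(t),t)·ẋᵢ(t) + ∂Jᵢ/∂t(x(t),t) + α(Jᵢ(x(t),t)) ≤ 0` for all `t ≥ 0`, then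
`d/dt J(x(t),t) ≤ −α(J(x(t),t))` for all `t ≥ 0` and `J(x(t),t) → 0` as `t → ∞`. -/
theorem santos_special_case {ι : Type*} [Fintype ι] [Nonempty ι] [DecidableEq ι]
    {n : ι → ℕ} {a : ℝ} (ha : 0 < a) {α : ℝ → ℝ}
    (hK : IsClassKOn a α) (hLip : LocallyLipschitzOn (Set.Ico 0 a) α)
    (hsub : SubadditiveOn a α)
    {x : ℝ → ∀ i, EuclideanSpace ℝ (Fin (n i))} (hx : ContDiff ℝ 1 x)
    {J : ι → ((∀ i, EuclideanSpace ℝ (Fin (n i))) × ℝ) → ℝ}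
    (hJ : ∀ i, ContDiff ℝ 1 (J i)) (hJnn : ∀ i p, 0 ≤ J i p)
    (hJ0 : (∑ i, J i (x 0, 0)) < a)
    (halign : ∀ i, ∀ y : ∀ i, EuclideanSpace ℝ (Fin (n i)), ∀ t : ℝ, 0 ≤ t →
      ∀ v : EuclideanSpace ℝ (Fin (n i)),
        fderiv ℝ (fun p => ∑ j, J j p) (y, t) (Pi.single i v, (0:ℝ)) =
          fderiv ℝ (J i) (y, t) (Pi.single i v, (0:ℝ)))
    (hcon : ∀ i, ∀ t : ℝ, 0 ≤ t →
      fderiv ℝ (J i) (x t, t) (Pi.single i (deriv x t i), (0:ℝ)) +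
        fderiv ℝ (J i) (x t, t) (0, 1) + α (J i (x t, t)) ≤ 0) :
    (∀ t : ℝ, 0 ≤ t →
      deriv (fun s => ∑ j, J j (x s, s)) t ≤ -α (∑ j, J j (x t, t))) ∧
    Filter.Tendsto (fun t => ∑ j, J j (x t, t)) Filter.atTop (nhds 0) :=
  santos_special_case_general hK hsub hx hJ hJnn hJ0 halign hcon
end
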